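/- arXiv:1802.08773 — 2 statements merged into one kernel-verified Lean document; each statement's English description precedes it below -/
import Mathlib

section
/- If k_1 and k_2 are positive semidefinite kernels on a set X, then their pointwise product k(x,y) = k_1(x,y)·k_2(x,y) is a positive semidefinite kernel on X. -/
/-!
A kernel `k` on `X` is positive semidefinite exactly when the `X × X` matrix `Matrix.of k` is,
since positive semidefiniteness of a matrix indexed by an arbitrary type is tested against
finitely supported vectors. The pointwise product of kernels is the Hadamard product of these
matrices, so the theorem is the Schur product theorem `Matrix.PosSemidef.hadamard`.
-/

/-- A kernel is positive semidefinite if it is symmetric and all finite Gram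
quadratic forms are nonnegative. -/
def IsPSDKernel {X : Type*} (k : X → X → ℝ) : Prop :=
  (∀ x y, k x y = k y x) ∧
  ∀ (m : ℕ) (x : Fin m → X) (c : Fin m → ℝ),
    0 ≤ ∑ i, ∑ j, c i * c j * k (x i) (x j)

theorem Finsupp.sum_eq_sum_equivFin {α M N : Type*} [Zero M] [AddCommMonoid N] (v : α →₀ M)
    (g : α → M → N) :
    v.sum g = ∑ i, g (v.support.equivFin.symm i) (v (v.support.equivFin.symm i)) := by
  rw [Finsupp.sum, ← Finset.sum_coe_sort, ← v.support.equivFin.symm.sum_comp]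

theorem isPSDKernel_iff_posSemidef {X : Type*} {k : X → X → ℝ} :
    IsPSDKernel k ↔ (Matrix.of k).PosSemidef := by
  have hsymm : (∀ x y, k x y = k y x) ↔ (Matrix.of k).IsHermitian := by
    rw [Matrix.IsHermitian.ext_iff]
    simp only [star_trivial, Matrix.of_apply, eq_comm]
  constructor
  · rintro ⟨hk, hquad⟩
    refine ⟨hsymm.1 hk, fun v => ?_⟩
    simpa [Finsupp.sum_eq_sum_equivFin, Finset.mul_sum, Finset.sum_mul, mul_comm, mul_left_comm]
      using hquad _ (fun i => v.support.equivFin.symm i) (fun i => v (v.support.equivFin.symm i))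
  · intro hM
    refine ⟨hsymm.2 hM.isHermitian, fun m x c => ?_⟩
    simpa [Finsupp.sum_fintype, mul_comm, mul_left_comm, mul_assoc] using
      (hM.submatrix x).2 (Finsupp.equivFunOnFinite.symm c)

/-- The pointwise product of two positive semidefinite kernels is a positive
semidefinite kernel. -/
theorem isPSDKernel_mul {X : Type*} (k₁ k₂ : X → X → ℝ)
    (h₁ : IsPSDKernel k₁) (h₂ : IsPSDKernel k₂) :
    IsPSDKernel (fun x y => k₁ x y * k₂ x y) :=
  isPSDKernel_iff_posSemidef.2 <|
    (isPSDKernel_iff_posSemidef.1 h₁).hadamard (isPSDKernel_iff_posSemidef.1 h₂)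
end

section
/- Let p and q be probability measures on ℝ with cumulative distribution functions F_p and F_q. Then the first Wasserstein distance satisfies W(p,q) = ∫_ℝ |F_p(t) − F_q(t)| dt. -/
/-!
For a coupling `γ` of `p` and `q` and a threshold `t`, the events `{x ≤ t}` and `{y ≤ t}` have
`γ`-probabilities `F_p(t)` and `F_q(t)`, so their symmetric difference has probability at least
`|F_p(t) - F_q(t)|`. Integrating over `t` (Tonelli) turns this probability into `E_γ |x - y|`,
since `|x - y|` is the length of the set of thresholds separating `x` and `y`. The comonotone
coupling `(F_p⁻¹(U), F_q⁻¹(U))`, `U` uniform on `(0, 1)`, attains equality: there the two events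
are `{U ≤ F_p(t)}` and `{U ≤ F_q(t)}`, which are nested.
-/

open MeasureTheory

/-- The first Wasserstein distance between measures on `ℝ`: the infimum over
couplings `γ` of `p` and `q` of `E_{(x,y) ∼ γ} |x - y|`. -/
noncomputable def wasserstein1 (p q : Measure ℝ) : ℝ :=
  ⨅ γ : {γ : Measure (ℝ × ℝ) // γ.map Prod.fst = p ∧ γ.map Prod.snd = q},
    ∫ z, |z.1 - z.2| ∂(γ : Measure (ℝ × ℝ))

open Set ProbabilityTheory
open scoped symmDiff

theorem Set.Ici_symmDiff_Ici {α : Type*} [LinearOrder α] (a b : α) :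
    Ici a ∆ Ici b = Ico (min a b) (max a b) := by
  ext t
  simp only [mem_symmDiff, mem_Ici, mem_Ico, min_le_iff, lt_max_iff]
  grind

theorem Set.Iic_symmDiff_Iic {α : Type*} [LinearOrder α] (a b : α) :
    Iic a ∆ Iic b = Ioc (min a b) (max a b) := by
  ext t
  simp only [mem_symmDiff, mem_Iic, mem_Ioc, min_lt_iff, le_max_iff]
  grind

theorem Real.volume_Ici_symmDiff_Ici (x y : ℝ) :
    volume (Ici x ∆ Ici y) = ENNReal.ofReal |x - y| := by
  rw [Ici_symmDiff_Ici, Real.volume_Ico, max_sub_min_eq_abs']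

theorem Real.volume_Ioc_inter_Ioo_zero_one {a b : ℝ} (ha : 0 ≤ a) (hb : b ≤ 1) :
    volume (Ioc a b ∩ Ioo 0 1) = ENNReal.ofReal (b - a) :=
  le_antisymm ((measure_mono inter_subset_left).trans_eq Real.volume_Ioc)
    (Real.volume_Ioo ▸ measure_mono fun _ hu =>
      ⟨Ioo_subset_Ioc_self hu, ha.trans_lt hu.1, hu.2.trans_le hb⟩)

theorem lintegral_ofReal_abs_sub_eq_lintegral_measure_symmDiff (γ : Measure (ℝ × ℝ))
    [SFinite γ] :
    ∫⁻ z, ENNReal.ofReal |z.1 - z.2| ∂γ = ∫⁻ t, γ ({z | z.1 ≤ t} ∆ {z | z.2 ≤ t}) := by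
  set S : Set ((ℝ × ℝ) × ℝ) := {w | w.1.1 ≤ w.2} ∆ {w | w.1.2 ≤ w.2}
  have hS : MeasurableSet S :=
    (measurableSet_le measurable_fst.fst measurable_snd).symmDiff
      (measurableSet_le measurable_fst.snd measurable_snd)
  calc ∫⁻ z, ENNReal.ofReal |z.1 - z.2| ∂γ = ∫⁻ z, volume (Prod.mk z ⁻¹' S) ∂γ := by
        simp_rw [← Real.volume_Ici_symmDiff_Ici]; rfl
    _ = γ.prod volume S := (Measure.prod_apply hS).symm
    _ = ∫⁻ t, γ ({z | z.1 ≤ t} ∆ {z | z.2 ≤ t}) := Measure.prod_apply_symm hS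

theorem ofReal_abs_measureReal_sub_le_measure_symmDiff {α : Type*} [MeasurableSpace α]
    (μ : Measure α) [IsFiniteMeasure μ] (s t : Set α) :
    ENNReal.ofReal |μ.real s - μ.real t| ≤ μ (s ∆ t) := by
  rcases le_total (μ.real t) (μ.real s) with h | h
  · rw [abs_of_nonneg (sub_nonneg.2 h), ENNReal.ofReal_sub _ measureReal_nonneg,
      ofReal_measureReal, ofReal_measureReal]
    exact le_measure_symmDiff
  · rw [abs_of_nonpos (sub_nonpos.2 h), neg_sub, ENNReal.ofReal_sub _ measureReal_nonneg,
      ofReal_measureReal, ofReal_measureReal, symmDiff_comm]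
    exact le_measure_symmDiff

theorem cdf_eq_measureReal_of_map_eq {α : Type*} [MeasurableSpace α] {μ : Measure α}
    {p : Measure ℝ} [IsProbabilityMeasure p] {f : α → ℝ} (hf : Measurable f)
    (h : μ.map f = p) (t : ℝ) : cdf p t = μ.real {a | f a ≤ t} := by
  rw [cdf_eq_real, ← h, map_measureReal_apply hf measurableSet_Iic]
  rfl

theorem lintegral_abs_cdf_sub_le_of_map_eq {p q : Measure ℝ} [IsProbabilityMeasure p]
    [IsProbabilityMeasure q] {γ : Measure (ℝ × ℝ)} (h1 : γ.map Prod.fst = p)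
    (h2 : γ.map Prod.snd = q) :
    ∫⁻ t, ENNReal.ofReal |cdf p t - cdf q t| ≤ ∫⁻ z, ENNReal.ofReal |z.1 - z.2| ∂γ := by
  have : IsProbabilityMeasure (γ.map Prod.fst) := h1 ▸ inferInstance
  have := Measure.isProbabilityMeasure_of_map (μ := γ) Prod.fst
  rw [lintegral_ofReal_abs_sub_eq_lintegral_measure_symmDiff]
  refine lintegral_mono fun t => ?_
  rw [cdf_eq_measureReal_of_map_eq measurable_fst h1,
    cdf_eq_measureReal_of_map_eq measurable_snd h2]
  exact ofReal_abs_measureReal_sub_le_measure_symmDiff γ _ _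

/-- The generalized inverse of `cdf p`. Outside `(0, 1)` the set is empty or unbounded below and
`sInf` returns the junk value `0`. -/
noncomputable def quantile (p : Measure ℝ) (u : ℝ) : ℝ := sInf {x | u ≤ cdf p x}

section Quantile

variable {p : Measure ℝ}

theorem quantile_le_iff {u : ℝ} (hu : u ∈ Ioo 0 1) {t : ℝ} :
    quantile p u ≤ t ↔ u ≤ cdf p t := by
  have hne : {x | u ≤ cdf p x}.Nonempty :=
    (((tendsto_cdf_atTop p).eventually (eventually_gt_nhds hu.2)).exists).imp fun _ => le_of_lt
  have hbdd : BddBelow {x | u ≤ cdf p x} := by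
    obtain ⟨x₀, hx₀⟩ := ((tendsto_cdf_atBot p).eventually (eventually_lt_nhds hu.1)).exists
    exact ⟨x₀, fun x hx => le_of_not_gt fun hlt => (hx.trans (monotone_cdf p hlt.le)).not_gt hx₀⟩
  refine ⟨fun h => ?_, fun h => csInf_le hbdd h⟩
  -- `u ≤ cdf p s` for every `s > t`, and `cdf p` is right-continuous
  refine ge_of_tendsto ((cdf p).right_continuous t |>.tendsto.mono_left
    (nhdsWithin_mono t Ioi_subset_Ici_self)) ?_
  filter_upwards [self_mem_nhdsWithin] with s hs
  obtain ⟨x, hx, hxs⟩ := exists_lt_of_csInf_lt hne (h.trans_lt hs)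
  exact hx.trans (monotone_cdf p hxs.le)

theorem monotoneOn_quantile : MonotoneOn (quantile p) (Ioo 0 1) := fun _ hu _ hv huv =>
  (quantile_le_iff hu).2 (huv.trans ((quantile_le_iff hv).1 le_rfl))

theorem setOf_quantile_le_inter_Ioo (t : ℝ) :
    {u | quantile p u ≤ t} ∩ Ioo 0 1 = Iic (cdf p t) ∩ Ioo 0 1 := by
  ext u
  exact ⟨fun ⟨h, hu⟩ => ⟨(quantile_le_iff hu).1 h, hu⟩,
    fun ⟨h, hu⟩ => ⟨(quantile_le_iff hu).2 h, hu⟩⟩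

theorem aemeasurable_quantile : AEMeasurable (quantile p) (volume.restrict (Ioo 0 1)) :=
  aemeasurable_restrict_of_monotoneOn measurableSet_Ioo monotoneOn_quantile

theorem map_quantile [IsProbabilityMeasure p] :
    (volume.restrict (Ioo 0 1)).map (quantile p) = p := by
  refine Measure.ext_of_Iic _ _ fun t => ?_
  rw [Measure.map_apply_of_aemeasurable aemeasurable_quantile measurableSet_Iic,
    Measure.restrict_apply' measurableSet_Ioo, ← ofReal_cdf]
  have : Iic (cdf p t) ∩ Ioo 0 1 = Ioc 0 (cdf p t) ∩ Ioo 0 1 := by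
    ext u; simp only [mem_inter_iff, mem_Iic, mem_Ioc, mem_Ioo]; grind
  change volume ({u | quantile p u ≤ t} ∩ _) = _
  rw [setOf_quantile_le_inter_Ioo, this,
    Real.volume_Ioc_inter_Ioo_zero_one le_rfl (cdf_le_one p t), sub_zero]

end Quantile

noncomputable def quantileCoupling (p q : Measure ℝ) : Measure (ℝ × ℝ) :=
  (volume.restrict (Ioo 0 1)).map fun u => (quantile p u, quantile q u)

section QuantileCoupling

variable (p q : Measure ℝ)

theorem aemeasurable_quantile_prod :
    AEMeasurable (fun u => (quantile p u, quantile q u)) (volume.restrict (Ioo 0 1)) :=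
  aemeasurable_quantile.prodMk aemeasurable_quantile

instance : IsFiniteMeasure (quantileCoupling p q) := by
  unfold quantileCoupling; infer_instance

theorem quantileCoupling_symmDiff (t : ℝ) :
    quantileCoupling p q ({z | z.1 ≤ t} ∆ {z | z.2 ≤ t}) =
      ENNReal.ofReal |cdf p t - cdf q t| := by
  rw [quantileCoupling, Measure.map_apply_of_aemeasurable (aemeasurable_quantile_prod p q)
      ((measurableSet_le measurable_fst measurable_const).symmDiff
        (measurableSet_le measurable_snd measurable_const)),
    Measure.restrict_apply' measurableSet_Ioo]
  change volume (({u | quantile p u ≤ t} ∆ {u | quantile q u ≤ t}) ∩ Ioo 0 1) = _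
  rw [inter_symmDiff_distrib_right, setOf_quantile_le_inter_Ioo, setOf_quantile_le_inter_Ioo,
    ← inter_symmDiff_distrib_right, Iic_symmDiff_Iic,
    Real.volume_Ioc_inter_Ioo_zero_one (le_min (cdf_nonneg p t) (cdf_nonneg q t))
      (max_le (cdf_le_one p t) (cdf_le_one q t)), max_sub_min_eq_abs']

theorem lintegral_quantileCoupling :
    ∫⁻ z, ENNReal.ofReal |z.1 - z.2| ∂quantileCoupling p q =
      ∫⁻ t, ENNReal.ofReal |cdf p t - cdf q t| := by
  rw [lintegral_ofReal_abs_sub_eq_lintegral_measure_symmDiff]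
  simp_rw [quantileCoupling_symmDiff]

theorem quantileCoupling_map_fst [IsProbabilityMeasure p] :
    (quantileCoupling p q).map Prod.fst = p := by
  rw [quantileCoupling, AEMeasurable.map_map_of_aemeasurable measurable_fst.aemeasurable
    (aemeasurable_quantile_prod p q)]
  exact map_quantile

theorem quantileCoupling_map_snd [IsProbabilityMeasure q] :
    (quantileCoupling p q).map Prod.snd = q := by
  rw [quantileCoupling, AEMeasurable.map_map_of_aemeasurable measurable_snd.aemeasurable
    (aemeasurable_quantile_prod p q)]
  exact map_quantile

end QuantileCoupling

theorem integrable_abs_sub_of_map_eq {p q : Measure ℝ} {γ : Measure (ℝ × ℝ)}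
    (h1 : γ.map Prod.fst = p) (h2 : γ.map Prod.snd = q)
    (hp : Integrable (fun x => |x|) p) (hq : Integrable (fun x => |x|) q) :
    Integrable (fun z : ℝ × ℝ => |z.1 - z.2|) γ := by
  have hp' : Integrable (fun z : ℝ × ℝ => |z.1|) γ := by
    subst h1; exact hp.comp_measurable measurable_fst
  have hq' : Integrable (fun z : ℝ × ℝ => |z.2|) γ := by
    subst h2; exact hq.comp_measurable measurable_snd
  refine (hp'.add hq').mono' (continuous_fst.sub continuous_snd).abs.aestronglyMeasurable
    (ae_of_all _ fun z => ?_)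
  rw [Real.norm_eq_abs, abs_abs]
  exact abs_sub _ _

/-- One-dimensional formula for the first Wasserstein distance: it equals the
integral of the absolute difference of the cumulative distribution functions. -/
theorem wasserstein1_eq_integral_cdf_diff (p q : Measure ℝ)
    [IsProbabilityMeasure p] [IsProbabilityMeasure q]
    (hp : Integrable (fun x => |x|) p) (hq : Integrable (fun x => |x|) q) :
    wasserstein1 p q =
      ∫ t : ℝ, |(p (Set.Iic t)).toReal - (q (Set.Iic t)).toReal| := by
  have cost_eq : ∀ γ : Measure (ℝ × ℝ), γ.map Prod.fst = p → γ.map Prod.snd = q →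
      ENNReal.ofReal (∫ z, |z.1 - z.2| ∂γ) = ∫⁻ z, ENNReal.ofReal |z.1 - z.2| ∂γ :=
    fun γ h1 h2 => ofReal_integral_eq_lintegral_ofReal (integrable_abs_sub_of_map_eq h1 h2 hp hq)
      (ae_of_all _ fun _ => abs_nonneg _)
  have rhs_eq : ∫ t : ℝ, |(p (Iic t)).toReal - (q (Iic t)).toReal| =
      (∫⁻ t, ENNReal.ofReal |cdf p t - cdf q t|).toReal := by
    simp_rw [← measureReal_def, ← cdf_eq_real]
    exact integral_eq_lintegral_of_nonneg_ae (ae_of_all _ fun _ => abs_nonneg _)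
      ((monotone_cdf p).measurable.sub (monotone_cdf q).measurable).abs.aestronglyMeasurable
  rw [rhs_eq]
  refine IsLeast.csInf_eq ⟨⟨⟨quantileCoupling p q, quantileCoupling_map_fst p q,
    quantileCoupling_map_snd p q⟩, ?_⟩, forall_mem_range.2 fun ⟨γ, h1, h2⟩ => ?_⟩
  · change ∫ z, |z.1 - z.2| ∂quantileCoupling p q = _
    rw [← lintegral_quantileCoupling,
      ← cost_eq _ (quantileCoupling_map_fst p q) (quantileCoupling_map_snd p q),
      ENNReal.toReal_ofReal (integral_nonneg fun _ => abs_nonneg _)]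
  · exact ENNReal.toReal_le_of_le_ofReal (integral_nonneg fun _ => abs_nonneg _)
      ((cost_eq γ h1 h2).symm ▸ lintegral_abs_cdf_sub_le_of_map_eq h1 h2)
end
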